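/- arXiv:1508.07052 — 5 statements merged into one kernel-verified Lean document; each statement's English description precedes it below -/
import Mathlib

section
/- For every n ≥ 4 and every i with 1 ≤ i ≤ n−3, the elementary shifted dual equivalence h_i is an involution on S_n. -/
/-- The symmetric group `S_n`, modeled as permutations of `ℕ` (one-line notation
`π 1, π 2, …, π n`) fixing `0` and everything above `n`. -/
def Sn (n : ℕ) : Set (Equiv.Perm ℕ) := {π | ∀ k, k = 0 ∨ n < k → π k = k}

/-- The elementary dual equivalence `d_i`: if the value `i` occurs between `i-1` and
`i+1` in position order it is the identity; if `i-1` is in the middle it swaps the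
values `i` and `i+1`; if `i+1` is in the middle it swaps the values `i-1` and `i`.
Positions of values are given by `π.symm`. -/
def dEq (i : ℕ) (π : Equiv.Perm ℕ) : Equiv.Perm ℕ :=
  if (π.symm i < π.symm (i-1) ∧ π.symm (i-1) < π.symm (i+1)) ∨
     (π.symm (i+1) < π.symm (i-1) ∧ π.symm (i-1) < π.symm i) then
    Equiv.swap i (i+1) * π
  else if (π.symm i < π.symm (i+1) ∧ π.symm (i+1) < π.symm (i-1)) ∨
     (π.symm (i-1) < π.symm (i+1) ∧ π.symm (i+1) < π.symm i) then
    Equiv.swap (i-1) i * π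
  else π

/-- The inverse descent set `ID(π) ⊆ {1, …, n-1}`: those `i` such that `i` occurs
after `i+1` in the one-line notation of `π`. -/
def ID (n : ℕ) (π : Equiv.Perm ℕ) : Finset ℕ :=
  (Finset.Ico 1 n).filter (fun i => π.symm (i+1) < π.symm i)

/-- The restricted dual equivalence `d_i^R`. -/
def dR (n i : ℕ) (π : Equiv.Perm ℕ) : Equiv.Perm ℕ :=
  if (i+1) ∈ ID n π ∧ (i+1) ∈ ID n (dEq i π) then π else dEq i π

/-- The (0-based) rank of the value `i + a` among the four values `i, i+1, i+2, i+3`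
with respect to position order in `π`. -/
def rk (π : Equiv.Perm ℕ) (i a : ℕ) : ℕ :=
  ((Finset.range 4).filter (fun b => π.symm (i + b) < π.symm (i + a))).card

/-- The elementary shifted dual equivalence `h_i`: it fixes all values outside
`I = [i, i+3]` and acts on the flattening of the subword of values in `I` by the
eight patterns `1x2y, x12y, 1x4y, x14y, 4x1y, x41y, 4x3y, x43y` (swapping `x` and
`y`), acting as the identity otherwise. Expressed via ranks: the patterns `1x2y, x12y`
swap the values `i+2, i+3`; the patterns `1x4y, x14y, 4x1y, x41y` swap `i+1, i+2`;
the patterns `4x3y, x43y` swap `i, i+1`. -/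
def hEq (i : ℕ) (π : Equiv.Perm ℕ) : Equiv.Perm ℕ :=
  if rk π i 1 = 2 ∧ rk π i 0 ≤ 1 then Equiv.swap (i+2) (i+3) * π
  else if (rk π i 0 = 2 ∧ rk π i 3 ≤ 1) ∨ (rk π i 3 = 2 ∧ rk π i 0 ≤ 1) then
    Equiv.swap (i+1) (i+2) * π
  else if rk π i 2 = 2 ∧ rk π i 3 ≤ 1 then Equiv.swap i (i+1) * π
  else π

set_option maxHeartbeats 2000000 in
/-- for `n ≥ 4` and `1 ≤ i ≤ n-3`, the elementary shifted dual
equivalence `h_i` is an involution on `S_n`. -/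
theorem hEq_involutive (n i : ℕ) (hn : 4 ≤ n) (hi : 1 ≤ i) (hi' : i ≤ n - 3)
    (π : Equiv.Perm ℕ) (hπ : π ∈ Sn n) :
    hEq i (hEq i π) = π := by
  clear hn hi hi' hπ
  have hsymm : ∀ (a b : ℕ) (ρ : Equiv.Perm ℕ) (k : ℕ),
      ((Equiv.swap a b) * ρ).symm k = ρ.symm (Equiv.swap a b k) := by
    intro a b ρ k; simp [Equiv.Perm.mul_def]
  have hrk : ∀ (ρ : Equiv.Perm ℕ) (a : ℕ), rk ρ i a =
      (if ρ.symm (i+0) < ρ.symm (i+a) then 1 else 0) +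
      (if ρ.symm (i+1) < ρ.symm (i+a) then 1 else 0) +
      (if ρ.symm (i+2) < ρ.symm (i+a) then 1 else 0) +
      (if ρ.symm (i+3) < ρ.symm (i+a) then 1 else 0) := by
    intro ρ a
    rw [rk, Finset.card_filter, show (4:ℕ) = 3+1 from rfl,
      Finset.sum_range_succ, Finset.sum_range_succ, Finset.sum_range_succ,
      Finset.sum_range_succ, Finset.sum_range_zero]
    omega
  have hq : ∀ a b : ℕ, a ≠ b → π.symm (i+a) ≠ π.symm (i+b) := by
    intro a b h
    exact π.symm.injective.ne (by omega)
  -- pairwise distinctness of ranks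
  have d02 : rk π i 0 ≠ rk π i 2 := by
    have h := hq 0 2 (by omega); rw [hrk, hrk]; split_ifs <;> omega
  have d12 : rk π i 1 ≠ rk π i 2 := by
    have h := hq 1 2 (by omega); rw [hrk, hrk]; split_ifs <;> omega
  have d23 : rk π i 2 ≠ rk π i 3 := by
    have h := hq 2 3 (by omega); rw [hrk, hrk]; split_ifs <;> omega
  -- branch lemmas for hEq
  have H1 : ∀ ρ, (rk ρ i 1 = 2 ∧ rk ρ i 0 ≤ 1) → hEq i ρ = Equiv.swap (i+2) (i+3) * ρ := by
    intro ρ h; rw [hEq, if_pos h]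
  have H2 : ∀ ρ, ¬(rk ρ i 1 = 2 ∧ rk ρ i 0 ≤ 1) →
      ((rk ρ i 0 = 2 ∧ rk ρ i 3 ≤ 1) ∨ (rk ρ i 3 = 2 ∧ rk ρ i 0 ≤ 1)) →
      hEq i ρ = Equiv.swap (i+1) (i+2) * ρ := by
    intro ρ h1 h2; rw [hEq, if_neg h1, if_pos h2]
  have H3 : ∀ ρ, ¬(rk ρ i 1 = 2 ∧ rk ρ i 0 ≤ 1) →
      ¬((rk ρ i 0 = 2 ∧ rk ρ i 3 ≤ 1) ∨ (rk ρ i 3 = 2 ∧ rk ρ i 0 ≤ 1)) →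
      (rk ρ i 2 = 2 ∧ rk ρ i 3 ≤ 1) →
      hEq i ρ = Equiv.swap i (i+1) * ρ := by
    intro ρ h1 h2 h3; rw [hEq, if_neg h1, if_neg h2, if_pos h3]
  have H4 : ∀ ρ, ¬(rk ρ i 1 = 2 ∧ rk ρ i 0 ≤ 1) →
      ¬((rk ρ i 0 = 2 ∧ rk ρ i 3 ≤ 1) ∨ (rk ρ i 3 = 2 ∧ rk ρ i 0 ≤ 1)) →
      ¬(rk ρ i 2 = 2 ∧ rk ρ i 3 ≤ 1) →
      hEq i ρ = ρ := by
    intro ρ h1 h2 h3; rw [hEq, if_neg h1, if_neg h2, if_neg h3]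
  by_cases c1 : rk π i 1 = 2 ∧ rk π i 0 ≤ 1
  · -- swap (i+2) (i+3)
    have E0 : Equiv.swap (i+2) (i+3) (i+0) = i+0 :=
      Equiv.swap_apply_of_ne_of_ne (by omega) (by omega)
    have E1 : Equiv.swap (i+2) (i+3) (i+1) = i+1 :=
      Equiv.swap_apply_of_ne_of_ne (by omega) (by omega)
    have E2 : Equiv.swap (i+2) (i+3) (i+2) = i+3 := Equiv.swap_apply_left _ _
    have E3 : Equiv.swap (i+2) (i+3) (i+3) = i+2 := Equiv.swap_apply_right _ _
    have A0 : rk (Equiv.swap (i+2) (i+3) * π) i 0 = rk π i 0 := by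
      rw [hrk, hrk]; simp only [hsymm, E0, E1, E2, E3]; split_ifs <;> omega
    have A1 : rk (Equiv.swap (i+2) (i+3) * π) i 1 = rk π i 1 := by
      rw [hrk, hrk]; simp only [hsymm, E0, E1, E2, E3]; split_ifs <;> omega
    rw [H1 π c1, H1 _ ⟨by rw [A1]; exact c1.1, by rw [A0]; exact c1.2⟩,
      ← mul_assoc, Equiv.swap_mul_self, one_mul]
  · by_cases c2 : (rk π i 0 = 2 ∧ rk π i 3 ≤ 1) ∨ (rk π i 3 = 2 ∧ rk π i 0 ≤ 1)
    · -- swap (i+1) (i+2)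
      have E0 : Equiv.swap (i+1) (i+2) (i+0) = i+0 :=
        Equiv.swap_apply_of_ne_of_ne (by omega) (by omega)
      have E1 : Equiv.swap (i+1) (i+2) (i+1) = i+2 := Equiv.swap_apply_left _ _
      have E2 : Equiv.swap (i+1) (i+2) (i+2) = i+1 := Equiv.swap_apply_right _ _
      have E3 : Equiv.swap (i+1) (i+2) (i+3) = i+3 :=
        Equiv.swap_apply_of_ne_of_ne (by omega) (by omega)
      have B0 : rk (Equiv.swap (i+1) (i+2) * π) i 0 = rk π i 0 := by
        rw [hrk, hrk]; simp only [hsymm, E0, E1, E2, E3]; split_ifs <;> omega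
      have B1 : rk (Equiv.swap (i+1) (i+2) * π) i 1 = rk π i 2 := by
        rw [hrk, hrk]; simp only [hsymm, E0, E1, E2, E3]; split_ifs <;> omega
      have B3 : rk (Equiv.swap (i+1) (i+2) * π) i 3 = rk π i 3 := by
        rw [hrk, hrk]; simp only [hsymm, E0, E1, E2, E3]; split_ifs <;> omega
      have n1 : ¬(rk (Equiv.swap (i+1) (i+2) * π) i 1 = 2 ∧
          rk (Equiv.swap (i+1) (i+2) * π) i 0 ≤ 1) := by
        rw [B1, B0]; omega
      rw [H2 π c1 c2, H2 _ n1 (by rw [B0, B3]; exact c2),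
        ← mul_assoc, Equiv.swap_mul_self, one_mul]
    · by_cases c3 : rk π i 2 = 2 ∧ rk π i 3 ≤ 1
      · -- swap i (i+1)
        have E0 : Equiv.swap i (i+1) (i+0) = i+1 := Equiv.swap_apply_left _ _
        have E1 : Equiv.swap i (i+1) (i+1) = i+0 := Equiv.swap_apply_right _ _
        have E2 : Equiv.swap i (i+1) (i+2) = i+2 :=
          Equiv.swap_apply_of_ne_of_ne (by omega) (by omega)
        have E3 : Equiv.swap i (i+1) (i+3) = i+3 :=
          Equiv.swap_apply_of_ne_of_ne (by omega) (by omega)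
        have C0 : rk (Equiv.swap i (i+1) * π) i 0 = rk π i 1 := by
          rw [hrk, hrk]; simp only [hsymm, E0, E1, E2, E3]; split_ifs <;> omega
        have C1 : rk (Equiv.swap i (i+1) * π) i 1 = rk π i 0 := by
          rw [hrk, hrk]; simp only [hsymm, E0, E1, E2, E3]; split_ifs <;> omega
        have C2 : rk (Equiv.swap i (i+1) * π) i 2 = rk π i 2 := by
          rw [hrk, hrk]; simp only [hsymm, E0, E1, E2, E3]; split_ifs <;> omega
        have C3 : rk (Equiv.swap i (i+1) * π) i 3 = rk π i 3 := by
          rw [hrk, hrk]; simp only [hsymm, E0, E1, E2, E3]; split_ifs <;> omega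
        have n1 : ¬(rk (Equiv.swap i (i+1) * π) i 1 = 2 ∧
            rk (Equiv.swap i (i+1) * π) i 0 ≤ 1) := by
          rw [C1, C0]; omega
        have n2 : ¬((rk (Equiv.swap i (i+1) * π) i 0 = 2 ∧
            rk (Equiv.swap i (i+1) * π) i 3 ≤ 1) ∨
            (rk (Equiv.swap i (i+1) * π) i 3 = 2 ∧
            rk (Equiv.swap i (i+1) * π) i 0 ≤ 1)) := by
          rw [C0, C3]; omega
        rw [H3 π c1 c2 c3, H3 _ n1 n2 (by rw [C2, C3]; exact c3),
          ← mul_assoc, Equiv.swap_mul_self, one_mul]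
      · rw [H4 π c1 c2 c3, H4 π c1 c2 c3]
end

section
/- For every n ≥ 4, every 1 ≤ i ≤ n−3 and every π ∈ S_n, if h_i(π) ≠ π then h_i(π) = d_{i+1}(π) or h_i(π) = d_{i+2}(π), where d_j denotes the elementary dual equivalence. -/
lemma rk_expand (π : Equiv.Perm ℕ) (i a : ℕ) :
    rk π i a = (if π.symm i < π.symm (i+a) then 1 else 0)
      + (if π.symm (i+1) < π.symm (i+a) then 1 else 0)
      + (if π.symm (i+2) < π.symm (i+a) then 1 else 0)
      + (if π.symm (i+3) < π.symm (i+a) then 1 else 0) := by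
  rw [rk, Finset.card_filter, Finset.sum_range_succ, Finset.sum_range_succ,
    Finset.sum_range_succ, Finset.sum_range_succ, Finset.sum_range_zero]
  simp

set_option maxHeartbeats 3200000 in
/-- every nontrivial action of `h_i` agrees with `d_{i+1}` or `d_{i+2}`. -/
theorem hEq_eq_dEq (n i : ℕ) (hn : 4 ≤ n) (hi : 1 ≤ i) (hi' : i ≤ n - 3)
    (π : Equiv.Perm ℕ) (hπ : π ∈ Sn n) (h : hEq i π ≠ π) :
    hEq i π = dEq (i + 1) π ∨ hEq i π = dEq (i + 2) π := by
  have d01 : π.symm i ≠ π.symm (i+1) := fun hh => by have := π.symm.injective hh; omega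
  have d02 : π.symm i ≠ π.symm (i+2) := fun hh => by have := π.symm.injective hh; omega
  have d03 : π.symm i ≠ π.symm (i+3) := fun hh => by have := π.symm.injective hh; omega
  have d12 : π.symm (i+1) ≠ π.symm (i+2) := fun hh => by have := π.symm.injective hh; omega
  have d13 : π.symm (i+1) ≠ π.symm (i+3) := fun hh => by have := π.symm.injective hh; omega
  have d23 : π.symm (i+2) ≠ π.symm (i+3) := fun hh => by have := π.symm.injective hh; omega
  have e0 := rk_expand π i 0
  have e1 := rk_expand π i 1
  have e2 := rk_expand π i 2
  have e3 := rk_expand π i 3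
  simp only [Nat.add_zero] at e0
  have ea1 : i+1-1 = i := by omega
  have ea2 : i+1+1 = i+2 := by omega
  have ea3 : i+2-1 = i+1 := by omega
  have ea4 : i+2+1 = i+3 := by omega
  by_cases c1 : rk π i 1 = 2 ∧ rk π i 0 ≤ 1
  · right
    have h1 := c1.1; have h0 := c1.2
    rw [e1] at h1; rw [e0] at h0
    have ord : (π.symm (i+2) < π.symm (i+1) ∧ π.symm (i+1) < π.symm (i+3)) ∨
        (π.symm (i+3) < π.symm (i+1) ∧ π.symm (i+1) < π.symm (i+2)) := by
      clear e0 e1 e2 e3 h c1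
      split_ifs at h1 h0 <;> omega
    rw [hEq, if_pos c1, dEq]
    simp only [ea3, ea4]
    rw [if_pos ord]
  · by_cases c2 : (rk π i 0 = 2 ∧ rk π i 3 ≤ 1) ∨ (rk π i 3 = 2 ∧ rk π i 0 ≤ 1)
    · rw [hEq, if_neg c1, if_pos c2]
      rcases c2 with ⟨h0, h3⟩ | ⟨h3, h0⟩
      · left
        rw [e0] at h0; rw [e3] at h3
        have ord : (π.symm (i+1) < π.symm i ∧ π.symm i < π.symm (i+2)) ∨
            (π.symm (i+2) < π.symm i ∧ π.symm i < π.symm (i+1)) := by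
          clear e0 e1 e2 e3 h c1
          split_ifs at h0 h3 <;> omega
        rw [dEq]
        simp only [ea1, ea2]
        rw [if_pos ord]
      · right
        rw [e3] at h3; rw [e0] at h0
        have ord : (π.symm (i+2) < π.symm (i+3) ∧ π.symm (i+3) < π.symm (i+1)) ∨
            (π.symm (i+1) < π.symm (i+3) ∧ π.symm (i+3) < π.symm (i+2)) := by
          clear e0 e1 e2 e3 h c1
          split_ifs at h0 h3 <;> omega
        rw [dEq]
        simp only [ea3, ea4]
        rw [if_neg (by omega : ¬((π.symm (i+2) < π.symm (i+1) ∧ π.symm (i+1) < π.symm (i+3)) ∨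
            (π.symm (i+3) < π.symm (i+1) ∧ π.symm (i+1) < π.symm (i+2)))), if_pos ord]
    · by_cases c3 : rk π i 2 = 2 ∧ rk π i 3 ≤ 1
      · left
        have h2 := c3.1; have h3 := c3.2
        rw [e2] at h2; rw [e3] at h3
        have ord : (π.symm (i+1) < π.symm (i+2) ∧ π.symm (i+2) < π.symm i) ∨
            (π.symm i < π.symm (i+2) ∧ π.symm (i+2) < π.symm (i+1)) := by
          clear e0 e1 e2 e3 h c1 c2 c3
          split_ifs at h2 h3 <;> omega
        rw [hEq, if_neg c1, if_neg c2, if_pos c3, dEq]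
        simp only [ea1, ea2]
        rw [if_neg (by omega : ¬((π.symm (i+1) < π.symm i ∧ π.symm i < π.symm (i+2)) ∨
            (π.symm (i+2) < π.symm i ∧ π.symm i < π.symm (i+1)))), if_pos ord]
      · exact absurd (by rw [hEq, if_neg c1, if_neg c2, if_neg c3]) h
end

section
/- Let π, π' ∈ S_n be distinct. If d_i^R(rev(π)) = rev(π') for some 2 ≤ i ≤ n−2, then h_{i−1}(π) = π'. -/
/-- The map `k ↦ n+1-k` on `{1, …, n}` (identity elsewhere). -/
def revFun (n : ℕ) : ℕ → ℕ := fun k => if 1 ≤ k ∧ k ≤ n then n + 1 - k else k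

lemma revFun_invol (n : ℕ) : Function.Involutive (revFun n) := by
  intro k; unfold revFun; split_ifs <;> omega

def revPerm (n : ℕ) : Equiv.Perm ℕ :=
  ⟨revFun n, revFun n, revFun_invol n, revFun_invol n⟩

/-- The reverse of `π`: the one-line word of `π` read from right to left. -/
def rev (n : ℕ) (π : Equiv.Perm ℕ) : Equiv.Perm ℕ := π * revPerm n

/-- The flip of `π`: reverse the one-line word and replace each value `v` by `n+1-v`. -/
def flipPerm (n : ℕ) (π : Equiv.Perm ℕ) : Equiv.Perm ℕ := revPerm n * π * revPerm n

lemma rk_eval (π : Equiv.Perm ℕ) (j a : ℕ) : rk π j a =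
    (if π.symm (j+0) < π.symm (j+a) then 1 else 0) +
    (if π.symm (j+1) < π.symm (j+a) then 1 else 0) +
    (if π.symm (j+2) < π.symm (j+a) then 1 else 0) +
    (if π.symm (j+3) < π.symm (j+a) then 1 else 0) := by
  unfold rk
  rw [Finset.card_filter, Finset.sum_range_succ, Finset.sum_range_succ,
    Finset.sum_range_succ, Finset.sum_range_succ, Finset.sum_range_zero, zero_add]

set_option maxHeartbeats 2000000 in
/-- for distinct `π, π' ∈ S_n`, if `d_i^R(rev(π)) = rev(π')` for some
`2 ≤ i ≤ n-2`, then `h_{i-1}(π) = π'`. -/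
theorem dR_rev_to_h (n i : ℕ) (hi : 2 ≤ i) (hi' : i ≤ n - 2)
    (π π' : Equiv.Perm ℕ) (hπ : π ∈ Sn n) (hπ' : π' ∈ Sn n) (hne : π ≠ π')
    (h : dR n i (rev n π) = rev n π') :
    hEq (i - 1) π = π' := by
  have hn : 4 ≤ n := by omega
  have e0 : i - 1 + 0 = i - 1 := by omega
  have e1 : i - 1 + 1 = i := by omega
  have e2 : i - 1 + 2 = i + 1 := by omega
  have e3 : i - 1 + 3 = i + 2 := by omega
  have hb : ∀ k, 1 ≤ k → k ≤ n → 1 ≤ π.symm k ∧ π.symm k ≤ n := by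
    intro k h1 h2
    rcases Nat.eq_zero_or_pos (π.symm k) with h0 | h0
    · exfalso
      have := hπ (π.symm k) (Or.inl h0)
      rw [Equiv.apply_symm_apply] at this
      omega
    · refine ⟨h0, ?_⟩
      by_contra hgt
      have := hπ (π.symm k) (Or.inr (by omega))
      rw [Equiv.apply_symm_apply] at this
      omega
  have hs : ∀ k, (rev n π).symm k = revFun n (π.symm k) := fun _ => rfl
  have flip : ∀ a b, 1 ≤ a → a ≤ n → 1 ≤ b → b ≤ n →
      (revFun n a < revFun n b ↔ b < a) := by
    intro a b h1 h2 h3 h4; unfold revFun; split_ifs <;> omega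
  have hrevinj : ∀ ρ ρ' : Equiv.Perm ℕ, rev n ρ = rev n ρ' → ρ = ρ' := by
    intro ρ ρ' hh
    unfold rev at hh
    exact mul_right_cancel hh
  have b0 := hb (i-1) (by omega) (by omega)
  have b1 := hb i (by omega) (by omega)
  have b2 := hb (i+1) (by omega) (by omega)
  have b3 := hb (i+2) (by omega) (by omega)
  have d : ∀ a b : ℕ, a ≠ b → π.symm a ≠ π.symm b :=
    fun a b hab hc => hab (π.symm.injective hc)
  have d01 : π.symm (i-1) ≠ π.symm i := d _ _ (by omega)
  have d02 : π.symm (i-1) ≠ π.symm (i+1) := d _ _ (by omega)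
  have d03 : π.symm (i-1) ≠ π.symm (i+2) := d _ _ (by omega)
  have d12 : π.symm i ≠ π.symm (i+1) := d _ _ (by omega)
  have d13 : π.symm i ≠ π.symm (i+2) := d _ _ (by omega)
  have d23 : π.symm (i+1) ≠ π.symm (i+2) := d _ _ (by omega)
  have mem1 : (i+1) ∈ ID n (rev n π) ↔ π.symm (i+1) < π.symm (i+2) := by
    simp only [ID, Finset.mem_filter, Finset.mem_Ico]
    rw [show i+1+1 = i+2 by omega, hs, hs, flip _ _ b3.1 b3.2 b2.1 b2.2]
    omega
  unfold dR at h
  split_ifs at h with hID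
  · exact absurd (hrevinj _ _ h) hne
  unfold dEq at h
  split_ifs at h with hA hB
  · -- case A : i-1 in the middle
    have hde : dEq i (rev n π) = Equiv.swap i (i+1) * rev n π := by
      unfold dEq; rw [if_pos hA]
    have hsw : ∀ k, (Equiv.swap i (i+1) * rev n π).symm k
        = (rev n π).symm (Equiv.swap i (i+1) k) := fun _ => rfl
    have mem2 : (i+1) ∈ ID n (dEq i (rev n π)) ↔ π.symm i < π.symm (i+2) := by
      rw [hde]
      simp only [ID, Finset.mem_filter, Finset.mem_Ico, hsw]
      rw [show i+1+1 = i+2 by omega,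
        Equiv.swap_apply_of_ne_of_ne (by omega : i+2 ≠ i) (by omega : i+2 ≠ i+1),
        Equiv.swap_apply_right, hs, hs, flip _ _ b3.1 b3.2 b1.1 b1.2]
      omega
    rw [mem1, mem2] at hID
    simp only [hs] at hA
    rw [flip _ _ b1.1 b1.2 b0.1 b0.2, flip _ _ b0.1 b0.2 b2.1 b2.2,
      flip _ _ b2.1 b2.2 b0.1 b0.2, flip _ _ b0.1 b0.2 b1.1 b1.2] at hA
    have hpe : Equiv.swap i (i+1) * π = π' := by
      apply hrevinj
      show (Equiv.swap i (i+1) * π) * revPerm n = rev n π'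
      rw [mul_assoc]
      exact h
    rw [← hpe]
    have key1 : ¬(rk π (i-1) 1 = 2 ∧ rk π (i-1) 0 ≤ 1) := by
      simp only [rk_eval]
      rw [e0, e1, e2, e3]
      simp only [lt_self_iff_false, if_false]
      split_ifs <;> omega
    have key2 : (rk π (i-1) 0 = 2 ∧ rk π (i-1) 3 ≤ 1) ∨
        (rk π (i-1) 3 = 2 ∧ rk π (i-1) 0 ≤ 1) := by
      simp only [rk_eval]
      rw [e0, e1, e2, e3]
      simp only [lt_self_iff_false, if_false]
      split_ifs <;> omega
    unfold hEq
    rw [if_neg key1, if_pos key2, e1, e2]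
  · -- case B : i+1 in the middle
    have hde : dEq i (rev n π) = Equiv.swap (i-1) i * rev n π := by
      unfold dEq; rw [if_neg hA, if_pos hB]
    have hsw : ∀ k, (Equiv.swap (i-1) i * rev n π).symm k
        = (rev n π).symm (Equiv.swap (i-1) i k) := fun _ => rfl
    have mem2 : (i+1) ∈ ID n (dEq i (rev n π)) ↔ π.symm (i+1) < π.symm (i+2) := by
      rw [hde]
      simp only [ID, Finset.mem_filter, Finset.mem_Ico, hsw]
      rw [show i+1+1 = i+2 by omega,
        Equiv.swap_apply_of_ne_of_ne (by omega : i+2 ≠ i-1) (by omega : i+2 ≠ i),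
        Equiv.swap_apply_of_ne_of_ne (by omega : i+1 ≠ i-1) (by omega : i+1 ≠ i),
        hs, hs, flip _ _ b3.1 b3.2 b2.1 b2.2]
      omega
    rw [mem1, mem2] at hID
    simp only [hs] at hB
    rw [flip _ _ b1.1 b1.2 b2.1 b2.2, flip _ _ b2.1 b2.2 b0.1 b0.2,
      flip _ _ b0.1 b0.2 b2.1 b2.2, flip _ _ b2.1 b2.2 b1.1 b1.2] at hB
    have hpe : Equiv.swap (i-1) i * π = π' := by
      apply hrevinj
      show (Equiv.swap (i-1) i * π) * revPerm n = rev n π'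
      rw [mul_assoc]
      exact h
    rw [← hpe]
    have key1 : ¬(rk π (i-1) 1 = 2 ∧ rk π (i-1) 0 ≤ 1) := by
      simp only [rk_eval]
      rw [e0, e1, e2, e3]
      simp only [lt_self_iff_false, if_false]
      split_ifs <;> omega
    have key2 : ¬((rk π (i-1) 0 = 2 ∧ rk π (i-1) 3 ≤ 1) ∨
        (rk π (i-1) 3 = 2 ∧ rk π (i-1) 0 ≤ 1)) := by
      simp only [rk_eval]
      rw [e0, e1, e2, e3]
      simp only [lt_self_iff_false, if_false]
      split_ifs <;> omega
    have key3 : rk π (i-1) 2 = 2 ∧ rk π (i-1) 3 ≤ 1 := by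
      simp only [rk_eval]
      rw [e0, e1, e2, e3]
      simp only [lt_self_iff_false, if_false]
      split_ifs <;> omega
    unfold hEq
    rw [if_neg key1, if_neg key2, if_pos key3, e1]
  · exact absurd (hrevinj _ _ h) hne
end

section
/- Let π, π' ∈ S_n be distinct. If d_i^R(flip(π)) = flip(π') for some 2 ≤ i ≤ n−2, then h_{n−i−1}(π) = π', where flip(π) is obtained by reversing the one-line word of π and replacing each value v by n+1−v. -/
lemma aux_symm_range {n : ℕ} {π : Equiv.Perm ℕ} (hπ : π ∈ Sn n) {k : ℕ}
    (h1 : 1 ≤ k) (h2 : k ≤ n) : 1 ≤ π.symm k ∧ π.symm k ≤ n := by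
  by_contra hc
  have h0 : π.symm k = 0 ∨ n < π.symm k := by omega
  have := hπ _ h0
  rw [Equiv.apply_symm_apply] at this
  omega

lemma aux_flip_flip (n : ℕ) (π : Equiv.Perm ℕ) : flipPerm n (flipPerm n π) = π := by
  ext x
  show revFun n (revFun n (π (revFun n (revFun n x)))) = π x
  rw [revFun_invol, revFun_invol]

lemma aux_flip_swap_mul (n a b : ℕ) (σ : Equiv.Perm ℕ) :
    flipPerm n (Equiv.swap a b * σ) = Equiv.swap (revFun n a) (revFun n b) * flipPerm n σ := by
  ext x
  show revFun n (Equiv.swap a b (σ (revFun n x)))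
      = Equiv.swap (revFun n a) (revFun n b) (revFun n (σ (revFun n x)))
  rw [(revFun_invol n).injective.swap_apply]

lemma aux_rk_eq (π : Equiv.Perm ℕ) (i a : ℕ) :
    rk π i a = (if π.symm (i + 0) < π.symm (i + a) then 1 else 0)
      + (if π.symm (i + 1) < π.symm (i + a) then 1 else 0)
      + (if π.symm (i + 2) < π.symm (i + a) then 1 else 0)
      + (if π.symm (i + 3) < π.symm (i + a) then 1 else 0) := by
  rw [rk, Finset.card_filter, Finset.sum_range_succ, Finset.sum_range_succ,
    Finset.sum_range_succ, Finset.sum_range_succ, Finset.sum_range_zero]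
  omega

lemma aux_swap_mul_symm (a b x : ℕ) (σ : Equiv.Perm ℕ) :
    (Equiv.swap a b * σ).symm x = σ.symm (Equiv.swap a b x) := by
  simp [Equiv.Perm.mul_def]

lemma aux_caseA1 (π : Equiv.Perm ℕ) (j : ℕ)
    (hc : (π.symm (j+3) < π.symm (j+2) ∧ π.symm (j+1) < π.symm (j+3)) ∨
          (π.symm (j+3) < π.symm (j+1) ∧ π.symm (j+2) < π.symm (j+3)))
    (hr : ¬(π.symm (j+1) < π.symm (j+0) ∧ π.symm (j+2) < π.symm (j+0))) :
    ¬(rk π j 1 = 2 ∧ rk π j 0 ≤ 1) := by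
  have hd : ∀ a b : ℕ, a ≠ b → π.symm (j+a) ≠ π.symm (j+b) := fun a b hab hcon =>
    hab (by have := π.symm.injective hcon; omega)
  have hd01 := hd 0 1 (by omega)
  have hd02 := hd 0 2 (by omega)
  have hd03 := hd 0 3 (by omega)
  have hd12 := hd 1 2 (by omega)
  have hd13 := hd 1 3 (by omega)
  have hd23 := hd 2 3 (by omega)
  clear hd
  simp only [aux_rk_eq, lt_self_iff_false, if_false]
  split_ifs <;> omega

lemma aux_caseA2 (π : Equiv.Perm ℕ) (j : ℕ)
    (hc : (π.symm (j+3) < π.symm (j+2) ∧ π.symm (j+1) < π.symm (j+3)) ∨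
          (π.symm (j+3) < π.symm (j+1) ∧ π.symm (j+2) < π.symm (j+3)))
    (hr : ¬(π.symm (j+1) < π.symm (j+0) ∧ π.symm (j+2) < π.symm (j+0))) :
    (rk π j 0 = 2 ∧ rk π j 3 ≤ 1) ∨ (rk π j 3 = 2 ∧ rk π j 0 ≤ 1) := by
  have hd : ∀ a b : ℕ, a ≠ b → π.symm (j+a) ≠ π.symm (j+b) := fun a b hab hcon =>
    hab (by have := π.symm.injective hcon; omega)
  have hd01 := hd 0 1 (by omega)
  have hd02 := hd 0 2 (by omega)
  have hd03 := hd 0 3 (by omega)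
  have hd12 := hd 1 2 (by omega)
  have hd13 := hd 1 3 (by omega)
  have hd23 := hd 2 3 (by omega)
  clear hd
  simp only [aux_rk_eq, lt_self_iff_false, if_false]
  split_ifs <;> omega

lemma aux_caseB (π : Equiv.Perm ℕ) (j : ℕ)
    (hc : (π.symm (j+1) < π.symm (j+2) ∧ π.symm (j+3) < π.symm (j+1)) ∨
          (π.symm (j+1) < π.symm (j+3) ∧ π.symm (j+2) < π.symm (j+1)))
    (hr : ¬(π.symm (j+1) < π.symm (j+0) ∧ π.symm (j+1) < π.symm (j+0))) :
    rk π j 1 = 2 ∧ rk π j 0 ≤ 1 := by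
  have hd : ∀ a b : ℕ, a ≠ b → π.symm (j+a) ≠ π.symm (j+b) := fun a b hab hcon =>
    hab (by have := π.symm.injective hcon; omega)
  have hd01 := hd 0 1 (by omega)
  have hd02 := hd 0 2 (by omega)
  have hd03 := hd 0 3 (by omega)
  have hd12 := hd 1 2 (by omega)
  have hd13 := hd 1 3 (by omega)
  have hd23 := hd 2 3 (by omega)
  clear hd
  simp only [aux_rk_eq, lt_self_iff_false, if_false]
  split_ifs <;> omega

/-- for distinct `π, π' ∈ S_n`, if `d_i^R(flip(π)) = flip(π')` for some
`2 ≤ i ≤ n-2`, then `h_{n-i-1}(π) = π'`. -/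
theorem dR_flip_to_h (n i : ℕ) (hi : 2 ≤ i) (hi' : i ≤ n - 2)
    (π π' : Equiv.Perm ℕ) (hπ : π ∈ Sn n) (hπ' : π' ∈ Sn n) (hne : π ≠ π')
    (h : dR n i (flipPerm n π) = flipPerm n π') :
    hEq (n - i - 1) π = π' := by
  have hn2 : i + 2 ≤ n := by omega
  set j := n - i - 1 with hjdef
  have hrange : ∀ a b : ℕ, 1 ≤ a → a ≤ n → 1 ≤ b → b ≤ n →
      ((flipPerm n π).symm a < (flipPerm n π).symm b ↔
        π.symm (n+1-b) < π.symm (n+1-a)) := by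
    intro a b ha1 ha2 hb1 hb2
    have hsa := aux_symm_range hπ (show 1 ≤ n+1-a by omega) (show n+1-a ≤ n by omega)
    have hsb := aux_symm_range hπ (show 1 ≤ n+1-b by omega) (show n+1-b ≤ n by omega)
    have hA : (flipPerm n π).symm a = n + 1 - π.symm (n+1-a) := by
      show revFun n (π.symm (revFun n a)) = _
      rw [show revFun n a = n+1-a from by simp only [revFun]; split_ifs <;> omega]
      simp only [revFun]; split_ifs <;> omega
    have hB : (flipPerm n π).symm b = n + 1 - π.symm (n+1-b) := by
      show revFun n (π.symm (revFun n b)) = _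
      rw [show revFun n b = n+1-b from by simp only [revFun]; split_ifs <;> omega]
      simp only [revFun]; split_ifs <;> omega
    rw [hA, hB]
    omega
  have e0 : n + 1 - (i+2) = j + 0 := by omega
  have e1 : n + 1 - (i+1) = j + 1 := by omega
  have e2 : n + 1 - i = j + 2 := by omega
  have e3 : n + 1 - (i-1) = j + 3 := by omega
  have tr : ∀ a b c d : ℕ, 1 ≤ a → a ≤ n → 1 ≤ b → b ≤ n →
      n + 1 - a = j + c → n + 1 - b = j + d →
      ((flipPerm n π).symm a < (flipPerm n π).symm b ↔
        π.symm (j+d) < π.symm (j+c)) := by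
    intro a b c d ha1 ha2 hb1 hb2 hc hd
    rw [hrange a b ha1 ha2 hb1 hb2, hc, hd]
  have t1 : (flipPerm n π).symm i < (flipPerm n π).symm (i-1) ↔
      π.symm (j+3) < π.symm (j+2) :=
    tr _ _ _ _ (by omega) (by omega) (by omega) (by omega) e2 e3
  have t2 : (flipPerm n π).symm (i-1) < (flipPerm n π).symm (i+1) ↔
      π.symm (j+1) < π.symm (j+3) :=
    tr _ _ _ _ (by omega) (by omega) (by omega) (by omega) e3 e1
  have t3 : (flipPerm n π).symm (i+1) < (flipPerm n π).symm (i-1) ↔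
      π.symm (j+3) < π.symm (j+1) :=
    tr _ _ _ _ (by omega) (by omega) (by omega) (by omega) e1 e3
  have t4 : (flipPerm n π).symm (i-1) < (flipPerm n π).symm i ↔
      π.symm (j+2) < π.symm (j+3) :=
    tr _ _ _ _ (by omega) (by omega) (by omega) (by omega) e3 e2
  have t5 : (flipPerm n π).symm i < (flipPerm n π).symm (i+1) ↔
      π.symm (j+1) < π.symm (j+2) :=
    tr _ _ _ _ (by omega) (by omega) (by omega) (by omega) e2 e1
  have t6 : (flipPerm n π).symm (i+1) < (flipPerm n π).symm i ↔
      π.symm (j+2) < π.symm (j+1) :=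
    tr _ _ _ _ (by omega) (by omega) (by omega) (by omega) e1 e2
  have t7 : (flipPerm n π).symm (i+1+1) < (flipPerm n π).symm (i+1) ↔
      π.symm (j+1) < π.symm (j+0) :=
    tr _ _ _ _ (by omega) (by omega) (by omega) (by omega) (by omega) (by omega)
  have t8 : (flipPerm n π).symm (i+1+1) < (flipPerm n π).symm i ↔
      π.symm (j+2) < π.symm (j+0) :=
    tr _ _ _ _ (by omega) (by omega) (by omega) (by omega) (by omega) (by omega)
  -- distinctness of the four positions
  have hdgen : ∀ a b : ℕ, a ≠ b → π.symm (j+a) ≠ π.symm (j+b) := by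
    intro a b hab hcon
    have := π.symm.injective hcon
    omega
  have hd01 := hdgen 0 1 (by omega)
  have hd02 := hdgen 0 2 (by omega)
  have hd03 := hdgen 0 3 (by omega)
  have hd12 := hdgen 1 2 (by omega)
  have hd13 := hdgen 1 3 (by omega)
  have hd23 := hdgen 2 3 (by omega)
  -- ID translations
  have idF : ((i+1) ∈ ID n (flipPerm n π)) ↔ π.symm (j+1) < π.symm (j+0) := by
    simp only [ID, Finset.mem_filter, Finset.mem_Ico, t7]
    omega
  have idD1 : ((i+1) ∈ ID n (Equiv.swap i (i+1) * flipPerm n π)) ↔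
      π.symm (j+2) < π.symm (j+0) := by
    simp only [ID, Finset.mem_filter, Finset.mem_Ico, aux_swap_mul_symm]
    rw [Equiv.swap_apply_of_ne_of_ne (show i+1+1 ≠ i by omega) (show i+1+1 ≠ i+1 by omega),
      Equiv.swap_apply_right, t8]
    omega
  have idD2 : ((i+1) ∈ ID n (Equiv.swap (i-1) i * flipPerm n π)) ↔
      π.symm (j+1) < π.symm (j+0) := by
    simp only [ID, Finset.mem_filter, Finset.mem_Ico, aux_swap_mul_symm]
    rw [Equiv.swap_apply_of_ne_of_ne (show i+1+1 ≠ i-1 by omega) (show i+1+1 ≠ i by omega),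
      Equiv.swap_apply_of_ne_of_ne (show i+1 ≠ i-1 by omega) (show i+1 ≠ i by omega), t7]
    omega
  have hπ'2 : flipPerm n (dR n i (flipPerm n π)) = π' := by rw [h, aux_flip_flip]
  by_cases hres : (i+1) ∈ ID n (flipPerm n π) ∧ (i+1) ∈ ID n (dEq i (flipPerm n π))
  · exfalso
    have hfix : dR n i (flipPerm n π) = flipPerm n π := by unfold dR; rw [if_pos hres]
    rw [hfix, aux_flip_flip] at hπ'2
    exact hne hπ'2
  · have hdR : dR n i (flipPerm n π) = dEq i (flipPerm n π) := by unfold dR; rw [if_neg hres]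
    rw [hdR] at hπ'2
    unfold dEq at hπ'2 hres
    split_ifs at hπ'2 hres with hc1 hc2
    · -- cond1 : swap i (i+1); on π side swap (j+1) (j+2)
      rw [aux_flip_swap_mul, aux_flip_flip,
        show revFun n i = j + 2 from by simp only [revFun]; split_ifs <;> omega,
        show revFun n (i+1) = j + 1 from by simp only [revFun]; split_ifs <;> omega] at hπ'2
      rw [t1, t2, t3, t4] at hc1
      rw [idF, idD1] at hres
      rw [← hπ'2]
      have hA := aux_caseA1 π j hc1 hres
      have hB := aux_caseA2 π j hc1 hres
      unfold hEq
      rw [if_neg hA, if_pos hB, Equiv.swap_comm]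
    · -- cond2 : swap (i-1) i; on π side swap (j+2) (j+3)
      rw [aux_flip_swap_mul, aux_flip_flip,
        show revFun n (i-1) = j + 3 from by simp only [revFun]; split_ifs <;> omega,
        show revFun n i = j + 2 from by simp only [revFun]; split_ifs <;> omega] at hπ'2
      rw [t5, t3, t2, t6] at hc2
      rw [idF, idD2] at hres
      rw [← hπ'2]
      have hA := aux_caseB π j hc2 hres
      unfold hEq
      rw [if_pos hA, Equiv.swap_comm]
    · rw [aux_flip_flip] at hπ'2
      exact absurd hπ'2 hne
end

section
/- Two standard Young tableaux of partition shapes are connected by a sequence of elementary dual equivalences d_i if and only if they have the same shape. Equivalently, the involutions d_i act transitively on SYT(λ) for each partition λ, and preserve the shape. -/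
open scoped Classical

noncomputable section

/-- `T` is a standard Young tableau of shape `μ` with entries `1, …, n`.
Here `μ` is a Young diagram (Mathlib convention: row `0` is the longest row,
so the reading word below reads rows from the largest row index down to row `0`,
which corresponds to French notation read from the top row down), and `T` assigns
`0` to cells outside `μ`. -/
def IsSYT (n : ℕ) (μ : YoungDiagram) (T : ℕ × ℕ → ℕ) : Prop :=
  (∀ c, c ∉ μ → T c = 0) ∧
  Set.BijOn T (↑μ.cells) (Set.Icc 1 n) ∧
  (∀ i j : ℕ, (i, j + 1) ∈ μ → T (i, j) < T (i, j + 1)) ∧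
  (∀ i j : ℕ, (i + 1, j) ∈ μ → T (i, j) < T (i + 1, j))

/-- The value `u` occurs before the value `v` in the row reading word of `T`
(rows read from the top row down, each row left to right). -/
def Precedes (μ : YoungDiagram) (T : ℕ × ℕ → ℕ) (u v : ℕ) : Prop :=
  ∃ cu ∈ μ.cells, ∃ cv ∈ μ.cells,
    T cu = u ∧ T cv = v ∧ (cv.1 < cu.1 ∨ (cu.1 = cv.1 ∧ cu.2 < cv.2))

/-- Interchange the values `a` and `b` in the filling `T`. -/
def swapVals (a b : ℕ) (T : ℕ × ℕ → ℕ) : ℕ × ℕ → ℕ :=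
  fun c => if T c = a then b else if T c = b then a else T c

/-- The elementary dual equivalence `d_i` acting on fillings via the row reading
word: identity if `i` occurs between `i-1` and `i+1`; if `i-1` is in the middle it
swaps the values `i` and `i+1`; if `i+1` is in the middle it swaps `i-1` and `i`. -/
def dT (μ : YoungDiagram) (i : ℕ) (T : ℕ × ℕ → ℕ) : ℕ × ℕ → ℕ :=
  if (Precedes μ T i (i-1) ∧ Precedes μ T (i-1) (i+1)) ∨
     (Precedes μ T (i+1) (i-1) ∧ Precedes μ T (i-1) i) then swapVals i (i+1) T
  else if (Precedes μ T i (i+1) ∧ Precedes μ T (i+1) (i-1)) ∨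
     (Precedes μ T (i-1) (i+1) ∧ Precedes μ T (i+1) i) then swapVals (i-1) i T
  else T

/-- One elementary dual equivalence step between standard Young tableaux (of a
common partition shape, with `n` boxes). -/
def dtRel (n : ℕ) (S S' : ℕ × ℕ → ℕ) : Prop :=
  ∃ μ : YoungDiagram, IsSYT n μ S ∧ IsSYT n μ S' ∧
    ∃ i, 2 ≤ i ∧ i ≤ n - 1 ∧ dT μ i S = S'

/-!
The shape of a tableau is the support of its filling, and each `d_i` step relates two tableaux
of one shape, so dual equivalent tableaux have the same shape.

Conversely, induct on `n`. Two tableaux of shape `μ` with `n` in the same corner are connected: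
for `i + 1 < n` the move `d_i` never looks at the entry `n`, so a chain between the tableaux
with `n` removed lifts. To move `n` from a corner `b` to a corner `a` in a higher row, fill `μ`
with `n - 1`, `n - 2`, `n` at `a`, `e`, `b`, where `e` is a cell read between `a` and `b` that
becomes a corner once `a` and `b` are removed; then `d_{n-1}` exchanges `n - 1` and `n`.
-/

namespace YoungDiagram

/-- Removes the cells `d ≥ c`; for a corner `c`, i.e. a maximal cell, that is `c` alone. -/
def erase (μ : YoungDiagram) (c : ℕ × ℕ) : YoungDiagram where
  cells := μ.cells.filter (¬ c ≤ ·)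
  isLowerSet a b hba ha := by
    simp only [Finset.coe_filter, Set.mem_ofPred_eq, mem_cells] at ha ⊢
    exact ⟨μ.isLowerSet hba ha.1, fun hcb => ha.2 (hcb.trans hba)⟩

variable {μ : YoungDiagram} {a b c d : ℕ × ℕ}

theorem mem_erase : d ∈ μ.erase c ↔ d ∈ μ ∧ ¬ c ≤ d := by
  simp [erase, ← mem_cells]

theorem erase_comm (μ : YoungDiagram) (c c' : ℕ × ℕ) :
    (μ.erase c).erase c' = (μ.erase c').erase c := by
  ext d
  simp only [mem_cells, mem_erase]
  tauto

theorem mem_erase_of_maximal (hc : Maximal (· ∈ μ) c) : d ∈ μ.erase c ↔ d ∈ μ ∧ d ≠ c := by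
  rw [mem_erase]
  refine and_congr_right fun hd => ⟨fun h hdc => h hdc.ge, fun h hcd => h ?_⟩
  exact hc.eq_of_le hd hcd |>.symm

theorem cells_erase_of_maximal (hc : Maximal (· ∈ μ) c) : (μ.erase c).cells = μ.cells.erase c := by
  ext d
  rw [mem_cells, mem_erase_of_maximal hc, Finset.mem_erase, mem_cells, and_comm]

theorem card_erase_add_one (hc : Maximal (· ∈ μ) c) : (μ.erase c).card + 1 = μ.card := by
  rw [YoungDiagram.card, cells_erase_of_maximal hc]
  exact Finset.card_erase_add_one (mem_cells c |>.2 hc.1)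

theorem maximal_erase (hc : Maximal (· ∈ μ) c) (hd : Maximal (· ∈ μ) d) (hdc : d ≠ c) :
    Maximal (· ∈ μ.erase c) d :=
  ⟨(mem_erase_of_maximal hc).2 ⟨hd.1, hdc⟩, fun _ hy => hd.2 (mem_erase.1 hy).1⟩

theorem maximal_of_succ_notMem (hc : c ∈ μ) (hup : (c.1 + 1, c.2) ∉ μ)
    (hright : (c.1, c.2 + 1) ∉ μ) : Maximal (· ∈ μ) c := by
  refine ⟨hc, fun d hd hcd => ?_⟩
  by_contra hdc
  rcases lt_or_ge c.1 d.1 with h | h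
  · exact hup (μ.up_left_mem h hcd.2 hd)
  · exact hright (μ.up_left_mem hcd.1 (lt_of_not_ge fun h2 => hdc ⟨h, h2⟩) hd)

theorem eq_of_maximal_of_fst_eq (ha : Maximal (· ∈ μ) a) (hb : Maximal (· ∈ μ) b)
    (h : a.1 = b.1) : a = b := by
  rcases le_total a.2 b.2 with h2 | h2
  · exact ha.eq_of_le hb.1 ⟨h.le, h2⟩
  · exact hb.eq_of_le ha.1 ⟨h.ge, h2⟩ |>.symm

theorem exists_maximal_erase_between (ha : Maximal (· ∈ μ) a) (hb : Maximal (· ∈ μ) b)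
    (hab : b.1 < a.1) :
    ∃ e, Maximal (· ∈ (μ.erase b).erase a) e ∧ e.1 < a.1 ∧
      (b.1 < e.1 ∨ e.1 = b.1 ∧ e.2 < b.2) := by
  have hba : a.2 < b.2 := lt_of_not_ge fun h => hab.not_ge (hb.le_of_ge ha.1 ⟨hab.le, h⟩).1
  set r := a.1 - 1
  set ν := μ.erase b
  have hra : (r, a.2) ∈ ν :=
    mem_erase.2 ⟨μ.up_left_mem (Nat.sub_le _ _) le_rfl ha.1, fun h => h.2.not_gt hba⟩
  have hlen : a.2 < ν.rowLen r := mem_iff_lt_rowLen.1 hra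
  have he : (r, ν.rowLen r - 1) ∈ ν := mem_iff_lt_rowLen.2 (by omega)
  refine ⟨(r, ν.rowLen r - 1), ⟨mem_erase.2 ⟨he, fun h => ?_⟩, fun y hy hey => ?_⟩,
    by dsimp only [r]; omega, ?_⟩
  · have : a.1 ≤ r := h.1
    omega
  · obtain ⟨hyν, hay⟩ := mem_erase.1 hy
    obtain ⟨hey1, hey2⟩ : r ≤ y.1 ∧ ν.rowLen r - 1 ≤ y.2 := hey
    rcases hey1.eq_or_lt with hr | hr
    · have : y.2 < ν.rowLen r := mem_iff_lt_rowLen.1 (hr ▸ hyν)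
      exact ⟨hr.ge, by dsimp only; omega⟩
    · have hup : (a.1, ν.rowLen r - 1) ∈ μ := μ.up_left_mem (by omega) hey2 (mem_erase.1 hyν).1
      have : ν.rowLen r - 1 ≤ a.2 := (ha.le_of_ge hup ⟨le_rfl, by omega⟩).2
      exact (hay ⟨by omega, by omega⟩).elim
  · rcases (show b.1 ≤ r by omega).lt_or_eq with h | h
    · exact Or.inl h
    · exact Or.inr ⟨h.symm, lt_of_not_ge fun h2 => (mem_erase.1 he).2 ⟨h.le, h2⟩⟩

end YoungDiagram

open YoungDiagram Function

namespace IsSYT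

variable {n : ℕ} {μ : YoungDiagram} {T U : ℕ × ℕ → ℕ} {c d : ℕ × ℕ}

theorem mem_Icc (hT : IsSYT n μ T) (hd : d ∈ μ) : T d ∈ Set.Icc 1 n :=
  hT.2.1.mapsTo (Finset.mem_coe.2 ((mem_cells d).2 hd))

theorem le (hT : IsSYT n μ T) (d : ℕ × ℕ) : T d ≤ n := by
  by_cases hd : d ∈ μ
  · exact (hT.mem_Icc hd).2
  · simp [hT.1 d hd]

theorem mem_iff_ne_zero (hT : IsSYT n μ T) : d ∈ μ ↔ T d ≠ 0 :=
  ⟨fun hd => (Nat.one_le_iff_ne_zero.1 (hT.mem_Icc hd).1), not_imp_comm.1 (hT.1 d)⟩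

theorem shape_eq {m : ℕ} {ν : YoungDiagram} (hμ : IsSYT n μ T) (hν : IsSYT m ν T) : μ = ν := by
  ext d
  rw [mem_cells, mem_cells, hμ.mem_iff_ne_zero, hν.mem_iff_ne_zero]

theorem card_eq (hT : IsSYT n μ T) : μ.card = n := by
  simpa using hT.2.1.ncard_eq

theorem exists_eq (hT : IsSYT n μ T) {v : ℕ} (hv : v ∈ Set.Icc 1 n) : ∃ d ∈ μ, T d = v := by
  obtain ⟨d, hd, rfl⟩ := hT.2.1.surjOn hv
  exact ⟨d, (mem_cells d).1 hd, rfl⟩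

theorem maximal_of_eq (hT : IsSYT n μ T) (hc : c ∈ μ) (hTc : T c = n) : Maximal (· ∈ μ) c :=
  maximal_of_succ_notMem hc (fun h => (hT.2.2.2 _ _ h).not_ge (hTc ▸ hT.le _))
    (fun h => (hT.2.2.1 _ _ h).not_ge (hTc ▸ hT.le _))

theorem of_reflTransGen {S : ℕ × ℕ → ℕ} (hT : IsSYT n μ T)
    (h : Relation.ReflTransGen (dtRel n) T S) : IsSYT n μ S := by
  induction h with
  | refl => exact hT
  | tail _ step ih =>
    obtain ⟨ν, hS, hS', -⟩ := step
    exact hS.shape_eq ih ▸ hS'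

theorem update_max (hc : Maximal (· ∈ μ) c) (hU : IsSYT n (μ.erase c) U) :
    IsSYT (n + 1) μ (update U c (n + 1)) := by
  have hcells : (μ.cells : Set (ℕ × ℕ)) = insert c ↑(μ.erase c).cells := by
    rw [cells_erase_of_maximal hc, Finset.coe_erase, Set.insert_sdiff_singleton,
      Set.insert_eq_of_mem (Finset.mem_coe.2 ((mem_cells c).2 hc.1))]
  have hvals : Set.Icc 1 (n + 1) = insert (n + 1) (Set.Icc 1 n) := by
    ext v
    simp only [Set.mem_Icc, Set.mem_insert_iff]
    omega
  have hlt : ∀ {p q : ℕ × ℕ}, p < q → q ∈ μ → (q ∈ μ.erase c → U p < U q) →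
      update U c (n + 1) p < update U c (n + 1) q := by
    intro p q hpq hq hUpq
    rw [update_of_ne (fun hpc : p = c => hc.not_gt hq (hpc ▸ hpq))]
    by_cases hqc : q = c
    · rw [hqc, update_self]
      exact Nat.lt_succ_of_le (hU.le p)
    · rw [update_of_ne hqc]
      exact hUpq ((mem_erase_of_maximal hc).2 ⟨hq, hqc⟩)
  refine ⟨fun d hd => ?_, ?_, fun i j h => hlt ?_ h (hU.2.2.1 i j),
    fun i j h => hlt ?_ h (hU.2.2.2 i j)⟩
  · rw [update_of_ne (fun hdc : d = c => hd (hdc ▸ hc.1))]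
    exact hU.1 d fun h => hd (mem_erase.1 h).1
  · rw [hcells, hvals]
    have hbij : Set.BijOn (update U c (n + 1)) ↑(μ.erase c).cells (Set.Icc 1 n) :=
      hU.2.1.congr fun d hd =>
        (update_of_ne ((mem_erase_of_maximal hc).1 ((mem_cells d).1 hd)).2 _ _).symm
    simpa using hbij.insert (a := c) (by simp)
  · exact Prod.mk_lt_mk_of_le_of_lt le_rfl j.lt_succ_self
  · exact Prod.mk_lt_mk_of_lt_of_le i.lt_succ_self le_rfl

theorem erase_max (hT : IsSYT (n + 1) μ T) (hc : c ∈ μ) (hTc : T c = n + 1) :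
    IsSYT n (μ.erase c) (update T c 0) := by
  have hmax := hT.maximal_of_eq hc hTc
  have hlt : ∀ {p q : ℕ × ℕ}, p < q → q ∈ μ.erase c → T p < T q →
      update T c 0 p < update T c 0 q := by
    intro p q hpq hq hTpq
    obtain ⟨hqμ, hqc⟩ := (mem_erase_of_maximal hmax).1 hq
    rwa [update_of_ne hqc, update_of_ne (fun hpc : p = c => hmax.not_gt hqμ (hpc ▸ hpq))]
  refine ⟨fun d hd => ?_, ?_, fun i j h => hlt ?_ h (hT.2.2.1 i j (mem_erase.1 h).1),
    fun i j h => hlt ?_ h (hT.2.2.2 i j (mem_erase.1 h).1)⟩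
  · by_cases hdc : d = c
    · rw [hdc, update_self]
    · rw [update_of_ne hdc]
      exact hT.1 d fun h => hd ((mem_erase_of_maximal hmax).2 ⟨h, hdc⟩)
  · have hvals : Set.Icc 1 (n + 1) \ {T c} = Set.Icc 1 n := by
      ext v
      simp only [Set.mem_sdiff, Set.mem_Icc, Set.mem_singleton_iff, hTc]
      omega
    rw [cells_erase_of_maximal hmax, Finset.coe_erase, ← hvals]
    exact (hT.2.1.sdiff_singleton (Finset.mem_coe.2 ((mem_cells c).2 hc))).congr
      fun d hd => (update_of_ne hd.2 _ _).symm
  · exact Prod.mk_lt_mk_of_le_of_lt le_rfl j.lt_succ_self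
  · exact Prod.mk_lt_mk_of_lt_of_le i.lt_succ_self le_rfl

end IsSYT

section UpdateMax

variable {n : ℕ} {μ : YoungDiagram} {U : ℕ × ℕ → ℕ} {c : ℕ × ℕ}

theorem precedes_update_max (hc : Maximal (· ∈ μ) c) {u v : ℕ} (hu : u ≤ n) (hv : v ≤ n) :
    Precedes μ (update U c (n + 1)) u v ↔ Precedes (μ.erase c) U u v := by
  have key : ∀ d w, w ≤ n →
      (d ∈ μ.cells ∧ update U c (n + 1) d = w ↔ d ∈ (μ.erase c).cells ∧ U d = w) := by
    intro d w hw
    rw [mem_cells, mem_cells, mem_erase_of_maximal hc]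
    by_cases hdc : d = c
    · simp only [hdc, update_self, ne_eq, not_true_eq_false, and_false, false_and, iff_false]
      omega
    · simp [hdc]
  constructor
  · rintro ⟨cu, hcu, cv, hcv, hu', hv', hord⟩
    obtain ⟨hcu', hu''⟩ := (key cu u hu).1 ⟨hcu, hu'⟩
    obtain ⟨hcv', hv''⟩ := (key cv v hv).1 ⟨hcv, hv'⟩
    exact ⟨cu, hcu', cv, hcv', hu'', hv'', hord⟩
  · rintro ⟨cu, hcu, cv, hcv, hu', hv', hord⟩
    obtain ⟨hcu', hu''⟩ := (key cu u hu).2 ⟨hcu, hu'⟩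
    obtain ⟨hcv', hv''⟩ := (key cv v hv).2 ⟨hcv, hv'⟩
    exact ⟨cu, hcu', cv, hcv', hu'', hv'', hord⟩

theorem swapVals_update {a b v : ℕ} (ha : a ≠ v) (hb : b ≠ v) (U : ℕ × ℕ → ℕ) :
    swapVals a b (update U c v) = update (swapVals a b U) c v := by
  funext d
  by_cases hdc : d = c
  · simp [swapVals, hdc, ha.symm, hb.symm]
  · simp [swapVals, hdc]

theorem dT_update_max (hc : Maximal (· ∈ μ) c) {i : ℕ} (hi : i + 1 ≤ n) (U : ℕ × ℕ → ℕ) :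
    dT μ i (update U c (n + 1)) = update (dT (μ.erase c) i U) c (n + 1) := by
  simp (disch := omega) only [dT, precedes_update_max hc]
  split_ifs
  · exact swapVals_update (by omega) (by omega) U
  · exact swapVals_update (by omega) (by omega) U
  · rfl

theorem reflTransGen_dtRel_update_max (hc : Maximal (· ∈ μ) c) (hU : IsSYT n (μ.erase c) U)
    {W : ℕ × ℕ → ℕ} (h : Relation.ReflTransGen (dtRel n) U W) :
    Relation.ReflTransGen (dtRel (n + 1)) (update U c (n + 1)) (update W c (n + 1)) := by
  induction h with
  | refl => exact .refl
  | tail hUV step ih =>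
    obtain ⟨ν, hV, hW, i, hi2, hin, rfl⟩ := step
    have hV' := hU.of_reflTransGen hUV
    obtain rfl := hV.shape_eq hV'
    exact ih.tail ⟨μ, hV'.update_max hc, hW.update_max hc, i, hi2, by omega,
      dT_update_max hc (by omega) _⟩

end UpdateMax

theorem exists_isSYT (μ : YoungDiagram) : ∃ T, IsSYT μ.card μ T := by
  induction h : μ.card generalizing μ with
  | zero =>
    have hμ : ∀ d, d ∉ μ := fun d hd =>
      Finset.card_eq_zero.1 h ▸ (mem_cells d).2 hd |> Finset.notMem_empty d
    refine ⟨fun _ => 0, fun _ _ => rfl, ?_, fun i j h => (hμ _ h).elim,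
      fun i j h => (hμ _ h).elim⟩
    rw [Finset.card_eq_zero.1 h, Set.Icc_eq_empty (by omega), Finset.coe_empty]
    exact Set.bijOn_empty _
  | succ n ih =>
    have hpos : 0 < μ.cells.card := by rw [← YoungDiagram.card, h]; exact n.succ_pos
    obtain ⟨c, hc⟩ := μ.cells.exists_maximal (Finset.card_pos.1 hpos)
    have hc' : Maximal (· ∈ μ) c := by simpa only [mem_cells] using hc
    obtain ⟨U, hU⟩ := ih (μ.erase c) (by have := card_erase_add_one hc'; omega)
    exact ⟨_, hU.update_max hc'⟩

theorem swapVals_update_update {x y : ℕ} {a b : ℕ × ℕ} {W : ℕ × ℕ → ℕ} (hxy : x < y)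
    (hab : a ≠ b) (hW : ∀ d, W d < x) :
    swapVals x y (update (update W a x) b y) = update (update W b x) a y := by
  funext d
  have := hW d
  by_cases hda : d = a
  · subst hda
    simp [swapVals, hab]
  · by_cases hdb : d = b
    · subst hdb
      simp [swapVals, hda]
    · simp only [swapVals, update_of_ne hda, update_of_ne hdb]
      split_ifs <;> omega

theorem exists_dtRel_swap_max {μ : YoungDiagram} {a b : ℕ × ℕ} (ha : Maximal (· ∈ μ) a)
    (hb : Maximal (· ∈ μ) b) (hab : b.1 < a.1) :
    ∃ U U', IsSYT μ.card μ U ∧ IsSYT μ.card μ U' ∧ U b = μ.card ∧ U' a = μ.card ∧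
      dtRel μ.card U U' ∧ dtRel μ.card U' U := by
  obtain ⟨e, he, hea, heb⟩ := exists_maximal_erase_between ha hb hab
  have hne : a ≠ b := fun h => hab.ne (congrArg Prod.fst h).symm
  have ha' := maximal_erase hb ha hne
  obtain ⟨⟨heμ, heb'⟩, hea'⟩ : (e ∈ μ ∧ e ≠ b) ∧ e ≠ a := by
    simpa only [mem_erase_of_maximal ha', mem_erase_of_maximal hb] using he.1
  obtain ⟨V, hV⟩ := exists_isSYT (((μ.erase b).erase a).erase e)
  set m := (((μ.erase b).erase a).erase e).card
  have hW := hV.update_max he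
  set W := update V e (m + 1)
  have hU := (hW.update_max ha').update_max hb
  have hU' := ((erase_comm μ b a ▸ hW).update_max (maximal_erase ha hb hne.symm)).update_max ha
  rw [hU.card_eq]
  have hWlt : ∀ d, W d < m + 2 := fun d => Nat.lt_succ_of_le (hW.le d)
  set U := update (update W a (m + 2)) b (m + 3)
  set U' := update (update W b (m + 2)) a (m + 3)
  have hbefore : ∀ S : ℕ × ℕ → ℕ, Precedes μ S (S a) (S e) ∧ Precedes μ S (S e) (S b) :=
    fun S => ⟨⟨a, (mem_cells a).2 ha.1, e, (mem_cells e).2 heμ, rfl, rfl, Or.inl hea⟩,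
      ⟨e, (mem_cells e).2 heμ, b, (mem_cells b).2 hb.1, rfl, rfl, heb⟩⟩
  have hUU' : dT μ (m + 2) U = U' := by
    have hUvals : U a = m + 2 ∧ U e = m + 1 ∧ U b = m + 3 := by simp [U, W, hne, hea', heb']
    have h : Precedes μ U (m + 2) (m + 1) ∧ Precedes μ U (m + 1) (m + 3) := by
      simpa only [hUvals] using hbefore U
    exact (if_pos (Or.inl h)).trans (swapVals_update_update (by omega) hne hWlt)
  have hU'U : dT μ (m + 2) U' = U := by
    have hU'vals : U' a = m + 3 ∧ U' e = m + 1 ∧ U' b = m + 2 := by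
      simp [U', W, hne.symm, hea', heb']
    have h : Precedes μ U' (m + 3) (m + 1) ∧ Precedes μ U' (m + 1) (m + 2) := by
      simpa only [hU'vals] using hbefore U'
    exact (if_pos (Or.inr h)).trans (swapVals_update_update (by omega) hne.symm hWlt)
  exact ⟨U, U', hU, hU', by simp [U], by simp [U'], ⟨μ, hU, hU', m + 2, by omega, by omega, hUU'⟩,
    ⟨μ, hU', hU, m + 2, by omega, by omega, hU'U⟩⟩

theorem IsSYT.reflTransGen_dtRel {n : ℕ} {μ : YoungDiagram} {T T' : ℕ × ℕ → ℕ}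
    (hT : IsSYT n μ T) (hT' : IsSYT n μ T') : Relation.ReflTransGen (dtRel n) T T' := by
  induction n generalizing μ T T' with
  | zero =>
    have hzero : ∀ {S}, IsSYT 0 μ S → S = 0 := fun hS =>
      funext fun d => hS.1 d fun hd => by simpa using hS.mem_Icc hd
    rw [hzero hT, hzero hT']
  | succ n ih =>
    have same_max : ∀ {S S' c}, IsSYT (n + 1) μ S → IsSYT (n + 1) μ S' → c ∈ μ →
        S c = n + 1 → S' c = n + 1 → Relation.ReflTransGen (dtRel (n + 1)) S S' := by
      intro S S' c hS hS' hc hSc hS'c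
      have := reflTransGen_dtRel_update_max (hS.maximal_of_eq hc hSc) (hS.erase_max hc hSc)
        (ih (hS.erase_max hc hSc) (hS'.erase_max hc hS'c))
      rwa [update_idem, update_idem, update_eq_self_iff.2 hSc.symm,
        update_eq_self_iff.2 hS'c.symm] at this
    obtain ⟨c, hc, hTc⟩ := hT.exists_eq (v := n + 1) (by simp)
    obtain ⟨c', hc', hT'c'⟩ := hT'.exists_eq (v := n + 1) (by simp)
    have hmax := hT.maximal_of_eq hc hTc
    have hmax' := hT'.maximal_of_eq hc' hT'c'
    rcases lt_trichotomy c.1 c'.1 with h | h | h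
    · obtain ⟨U, U', hU, hU', hUc, hU'c', hUU', -⟩ := exists_dtRel_swap_max hmax' hmax h
      rw [hT.card_eq] at hU hU' hUc hU'c' hUU'
      exact (same_max hT hU hc hTc hUc).trans (.head hUU' (same_max hU' hT' hc' hU'c' hT'c'))
    · obtain rfl := eq_of_maximal_of_fst_eq hmax hmax' h
      exact same_max hT hT' hc hTc hT'c'
    · obtain ⟨U, U', hU, hU', hUc', hU'c, -, hU'U⟩ := exists_dtRel_swap_max hmax hmax' h
      rw [hT.card_eq] at hU hU' hUc' hU'c hU'U
      exact (same_max hT hU' hc hTc hU'c).trans (.head hU'U (same_max hU hT' hc' hUc' hT'c'))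

theorem dual_equivalent_iff_same_shape_general (n : ℕ) (μ μ' : YoungDiagram)
    (T T' : ℕ × ℕ → ℕ)
    (hT : IsSYT n μ T) (hT' : IsSYT n μ' T') :
    Relation.ReflTransGen (dtRel n) T T' ↔ μ = μ' :=
  ⟨fun h => (hT.of_reflTransGen h).shape_eq hT', fun h => hT.reflTransGen_dtRel (h ▸ hT')⟩

/-- two standard Young tableaux of partition shapes are connected by
a sequence of elementary dual equivalences `d_i` if and only if they have the same
shape. -/
theorem dual_equivalent_iff_same_shape (n : ℕ) (μ μ' : YoungDiagram)
    (hμ : μ.card = n) (hμ' : μ'.card = n) (T T' : ℕ × ℕ → ℕ)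
    (hT : IsSYT n μ T) (hT' : IsSYT n μ' T') :
    Relation.ReflTransGen (dtRel n) T T' ↔ μ = μ' :=
  dual_equivalent_iff_same_shape_general n μ μ' T T' hT hT'
end
end
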